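/- Let A be an associative (not necessarily commutative) ring, let a, b, δ ∈ A satisfy δa = aδ + b and ab = ba, let M be a left A-module and z ∈ M with a • z = 0. Then: (i) for all integers s > t ≥ 0, a^s • (δ^t • z) = 0; and (ii) for every integer t ≥ 0, a^t • (δ^t • z) = (−1)^t · t! · (b^t • z). -/
import Mathlib


/-- Let `A` be an associative ring, `a, b, δ ∈ A` with `δa = aδ + b` and `ab = ba`, `M` a left
`A`-module and `z ∈ M` with `a • z = 0`. Then `a^s • (δ^t • z) = 0` for `s > t ≥ 0`, and
`a^t • (δ^t • z) = (-1)^t · t! · (b^t • z)` for all `t ≥ 0`. -/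
theorem pow_smul_pow_smul_of_comm (A : Type*) [Ring A] (M : Type*) [AddCommGroup M]
    [Module A M] (a b δ : A) (h1 : δ * a = a * δ + b) (h2 : a * b = b * a)
    (z : M) (hz : a • z = 0) :
    (∀ s t : ℕ, t < s → a ^ s • (δ ^ t • z) = 0) ∧
    (∀ t : ℕ, a ^ t • (δ ^ t • z) = ((-1 : ℤ) ^ t * t.factorial) • (b ^ t • z)) := by
  have hc : Commute a b := h2
  -- commutation of a^(s+1) with δ
  have key : ∀ s : ℕ, a ^ (s+1) * δ = δ * a ^ (s+1) - ((s : A)+1) * (a ^ s * b) := by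
    intro s
    induction s with
    | zero =>
      simp only [zero_add, pow_one, pow_zero, one_mul, Nat.cast_zero]
      rw [h1, add_sub_cancel_right]
    | succ s ih =>
      have hstep : a ^ (s+1+1) * δ = a * (a ^ (s+1) * δ) := by
        rw [pow_succ' a (s+1), mul_assoc]
      have hcast : a * ((s : A) + 1) = ((s : A) + 1) * a :=
        (((Nat.cast_commute s a).add_left (Commute.one_left a)).eq).symm
      have hb : b * a ^ (s+1) = a ^ (s+1) * b := ((hc.symm).pow_right (s+1)).eq
      have h1' : a * δ = δ * a - b := eq_sub_iff_add_eq.mpr h1.symm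
      rw [hstep, ih, mul_sub, ← mul_assoc a δ, h1', ← mul_assoc a ((s:A)+1), hcast,
        mul_assoc ((s:A)+1) a, ← mul_assoc a (a ^ s) b, ← pow_succ' a s, sub_mul, mul_assoc δ a, ← pow_succ' a (s+1),
        hb]
      push_cast
      noncomm_ring
  -- zero lemma for t = 0
  have zero0 : ∀ s : ℕ, 0 < s → a ^ s • z = 0 := by
    intro s hs
    obtain ⟨k, rfl⟩ := Nat.exists_eq_add_of_lt hs
    rw [zero_add, pow_succ, mul_smul, hz, smul_zero]
  have main : ∀ t : ℕ, (∀ s : ℕ, t < s → a ^ s • (δ ^ t • z) = 0) ∧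
      a ^ t • (δ ^ t • z) = ((-1 : ℤ) ^ t * t.factorial) • (b ^ t • z) := by
    intro t
    induction t with
    | zero =>
      refine ⟨fun s hs => by simpa using zero0 s hs, by simp⟩
    | succ t ih =>
      obtain ⟨ihz, ihe⟩ := ih
      -- master computation for s = r+1
      have step : ∀ r : ℕ, a ^ (r+1) • (δ ^ (t+1) • z) =
          δ • (a ^ (r+1) • (δ ^ t • z)) - ((r : A)+1) • (b • (a ^ r • (δ ^ t • z))) := by
        intro r
        have hb : a ^ r * b = b * a ^ r := (hc.pow_left r).eq
        have h0 : a ^ (r+1) • (δ ^ (t+1) • z) = ((a ^ (r+1) * δ) * δ ^ t) • z := by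
          rw [← mul_smul, pow_succ' δ t, ← mul_assoc]
        rw [h0, key r, sub_mul, sub_smul]
        congr 1
        · rw [mul_smul, mul_smul]
        · have hre : (a ^ r * b) * δ ^ t = b * (a ^ r * δ ^ t) := by rw [hb, mul_assoc]
          rw [mul_assoc ((r:A)+1), hre]
          simp only [mul_smul]
      constructor
      · intro s hs
        obtain ⟨r, rfl⟩ : ∃ r, s = r + 1 := ⟨s - 1, by omega⟩
        rw [step r, ihz (r+1) (by omega), ihz r (by omega)]
        simp
      · rw [step t, ihz (t+1) (by omega), ihe]
        have hcomm : b • (((-1 : ℤ) ^ t * (t.factorial : ℤ)) • (b ^ t • z)) =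
            ((-1 : ℤ) ^ t * (t.factorial : ℤ)) • (b • (b ^ t • z)) := smul_comm _ _ _
        rw [hcomm, smul_zero, zero_sub]
        have hA : ((t : A) + 1) = (((t : ℕ) + 1 : ℤ) : A) := by push_cast; ring
        rw [hA, Int.cast_smul_eq_zsmul, smul_smul, ← neg_smul]
        have hbpow : b • (b ^ t • z) = b ^ (t+1) • z := by
          rw [pow_succ', mul_smul]
        rw [hbpow]
        congr 1
        push_cast [Nat.factorial_succ]
        ring
  exact ⟨fun s t h => (main t).1 s h, fun t => (main t).2⟩
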